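/- arXiv:2507.07842 — 7 statements merged into one kernel-verified Lean document; each statement's English description precedes it below -/
import Mathlib

section
/- (Singleton-like bound for rank-metric codes) If C ⊆ F_q^{m×n} is a set of matrices such that any two distinct elements A, B ∈ C satisfy rank(A−B) ≥ d, where 1 ≤ d ≤ min{m,n}, then |C| ≤ q^{max{m,n}·(min{m,n} − d + 1)}. -/
/-!
Deleting `d - 1` rows (or, after transposing, columns) is injective on the code: two words
that agree on the remaining rows differ by a matrix with at most `d - 1` nonzero rows, hence
of rank `< d`. The punctured words range over a set of `q ^ (n * (m - d + 1))` elements.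
-/

open Finset

namespace RankMetricCode

variable {F ι κ : Type*} [Field F] [Fintype F] [Fintype ι] [Fintype κ]

theorem card_le_of_card_compl_lt [DecidableEq ι] (d : ℕ) (s : Finset ι)
    (hs : sᶜ.card < d) (C : Finset (Matrix ι κ F))
    (hC : ∀ A ∈ C, ∀ B ∈ C, A ≠ B → d ≤ (A - B).rank) :
    C.card ≤ Fintype.card F ^ (Fintype.card κ * s.card) := by
  classical
  have hinj : Set.InjOn (fun A : Matrix ι κ F => fun i : s => A i) C := by
    intro A hA B hB hAB
    by_contra hne
    have hsupp : Function.support (A - B).row ⊆ ↑sᶜ := by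
      intro i hi
      by_contra his
      rw [coe_compl, Set.mem_compl_iff, not_not] at his
      exact hi (sub_eq_zero.2 (congrFun hAB ⟨i, his⟩))
    have := (A - B).rank_le_card_of_support_subset sᶜ hsupp
    have := hC A hA B hB hne
    omega
  calc C.card ≤ (univ : Finset (s → κ → F)).card :=
        card_le_card_of_injOn _ (fun _ _ => mem_univ _) hinj
    _ = Fintype.card F ^ (Fintype.card κ * s.card) := by
        simp [pow_mul]

theorem card_le_singleton_rows (d : ℕ) (hd1 : 1 ≤ d) (hd : d ≤ Fintype.card ι)
    (C : Finset (Matrix ι κ F))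
    (hC : ∀ A ∈ C, ∀ B ∈ C, A ≠ B → d ≤ (A - B).rank) :
    C.card ≤ Fintype.card F ^ (Fintype.card κ * (Fintype.card ι - d + 1)) := by
  classical
  obtain ⟨s, -, hs⟩ := exists_subset_card_eq (s := (univ : Finset ι))
    (n := Fintype.card ι - d + 1) (by rw [card_univ]; omega)
  rw [← hs]
  refine card_le_of_card_compl_lt d s ?_ C hC
  rw [card_compl, hs]
  omega

theorem card_le_singleton_cols (d : ℕ) (hd1 : 1 ≤ d) (hd : d ≤ Fintype.card κ)
    (C : Finset (Matrix ι κ F))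
    (hC : ∀ A ∈ C, ∀ B ∈ C, A ≠ B → d ≤ (A - B).rank) :
    C.card ≤ Fintype.card F ^ (Fintype.card ι * (Fintype.card κ - d + 1)) := by
  classical
  rw [← card_image_of_injective C Matrix.transpose_injective]
  refine card_le_singleton_rows d hd1 hd _ ?_
  simp only [mem_image]
  rintro _ ⟨A, hA, rfl⟩ _ ⟨B, hB, rfl⟩ hne
  rw [← Matrix.transpose_sub, Matrix.rank_transpose]
  exact hC A hA B hB (fun h => hne (h ▸ rfl))

end RankMetricCode

/-- Singleton-like bound for rank-metric codes: if any two distinct matrices in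
`C ⊆ F_q^{m×n}` differ by a matrix of rank at least `d`, with `1 ≤ d ≤ min m n`,
then `|C| ≤ q^{max{m,n}·(min{m,n} − d + 1)}`. -/
theorem stmt3 (F : Type*) [Field F] [Fintype F] (m n d : ℕ)
    (hd1 : 1 ≤ d) (hd : d ≤ min m n)
    (C : Finset (Matrix (Fin m) (Fin n) F))
    (hC : ∀ A ∈ C, ∀ B ∈ C, A ≠ B → d ≤ (A - B).rank) :
    C.card ≤ (Fintype.card F) ^ (max m n * (min m n - d + 1)) := by
  rcases le_total m n with h | h
  · rw [min_eq_left h, max_eq_right h]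
    simpa using RankMetricCode.card_le_singleton_rows d hd1
      (by simpa using (le_min_iff.1 hd).1) C hC
  · rw [min_eq_right h, max_eq_left h]
    simpa using RankMetricCode.card_le_singleton_cols d hd1
      (by simpa using (le_min_iff.1 hd).2) C hC
end

section
/- If U and V are k-dimensional subspaces of F_q^n whose reduced row echelon form generator matrices have the same pivot column set (i.e., equal identifying vectors), then d_S(U,V) = 2·rank(C_U − C_V), where C_U and C_V are the submatrices of the RREF generator matrices of U and V obtained by deleting the pivot columns. -/
/-!
The pivot columns of `M` and `N` form the same identity block, so `D = M - N` vanishes on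
them. A vector of the row space of `M` is `c ᵥ* M` and its pivot coordinates are exactly `c`,
while every vector of the row space of `D` has zero pivot coordinates; hence the two row spaces
are disjoint. Since `U ⊔ V` is spanned by the rows of `M` and of `D`, it has dimension
`k + rank D`, so `dim (U ⊓ V) = k - rank D` and `d_S(U, V) = 2 rank D`. Finally `D` has zero
pivot columns, so deleting them does not change its rank.
-/

open Module

/-- `M` is in reduced row echelon form with pivot columns given by `p`. -/
def IsRREF {F : Type*} [Field F] {k n : ℕ}
    (M : Matrix (Fin k) (Fin n) F) (p : Fin k → Fin n) : Prop :=
  StrictMono p ∧ (∀ i, M i (p i) = 1) ∧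
    (∀ (i : Fin k) (j : Fin n), (j : ℕ) < (p i : ℕ) → M i j = 0) ∧
    (∀ i i', i' ≠ i → M i' (p i) = 0)

open Matrix

theorem IsRREF.submatrix_pivots_eq_one {F : Type*} [Field F] {k n : ℕ}
    {M : Matrix (Fin k) (Fin n) F} {p : Fin k → Fin n} (hM : IsRREF M p) :
    M.submatrix id p = 1 := by
  ext i j
  rw [submatrix_apply, id, one_apply]
  split_ifs with h
  · exact h ▸ hM.2.1 i
  · exact hM.2.2.2 j i h

theorem Submodule.span_range_sup_span_range_eq_sup_sub {R E ι : Type*} [Ring R]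
    [AddCommGroup E] [Module R E] (u v : ι → E) :
    span R (Set.range u) ⊔ span R (Set.range v)
      = span R (Set.range u) ⊔ span R (Set.range (u - v)) := by
  rw [← span_union, ← span_union]
  have hu : ∀ i, u i ∈ span R (Set.range u ∪ Set.range (u - v)) := fun i =>
    subset_span (Or.inl ⟨i, rfl⟩)
  have hu' : ∀ i, u i ∈ span R (Set.range u ∪ Set.range v) := fun i =>
    subset_span (Or.inl ⟨i, rfl⟩)
  refine span_eq_span ?_ ?_
  · rintro _ (⟨i, rfl⟩ | ⟨i, rfl⟩)
    · exact hu i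
    · rw [SetLike.mem_coe, ← sub_sub_cancel (u i) (v i)]
      exact sub_mem (hu i) (subset_span (Or.inr ⟨i, rfl⟩))
  · rintro _ (⟨i, rfl⟩ | ⟨i, rfl⟩)
    · exact hu' i
    · exact sub_mem (hu' i) (subset_span (Or.inr ⟨i, rfl⟩))

namespace Matrix

variable {F : Type*} [Field F] {m n : Type*} [Fintype m]

theorem rank_submatrix_id_eq_of_col_eq_zero [Fintype n] {o : Type*} [Fintype o]
    (D : Matrix m n F) (e : o → n) (h : ∀ j ∉ Set.range e, D.col j = 0) :
    (D.submatrix id e).rank = D.rank := by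
  refine le_antisymm (D.rank_submatrix_le id e) ?_
  rw [rank_eq_finrank_span_cols, rank_eq_finrank_span_cols]
  refine Submodule.finrank_mono (Submodule.span_le.2 ?_)
  rintro _ ⟨j, rfl⟩
  by_cases hj : j ∈ Set.range e
  · obtain ⟨j', rfl⟩ := hj
    exact Submodule.subset_span ⟨j', rfl⟩
  · rw [SetLike.mem_coe, h j hj]
    exact Submodule.zero_mem _

theorem mem_span_range_row_iff_exists_vecMul {A : Matrix m n F} {v : n → F} :
    v ∈ Submodule.span F (Set.range A.row) ↔ ∃ c, c ᵥ* A = v := by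
  rw [← range_vecMulLinear]
  rfl

variable [DecidableEq m] {M : Matrix m n F} {p : m → n}

theorem disjoint_span_row_of_submatrix_eq_one_of_submatrix_eq_zero {l : Type*} [Fintype l]
    {D : Matrix l n F} (hM : M.submatrix id p = 1) (hD : D.submatrix id p = 0) :
    Disjoint (Submodule.span F (Set.range M.row)) (Submodule.span F (Set.range D.row)) := by
  rw [Submodule.disjoint_def]
  rintro v hvM hvD
  obtain ⟨c, rfl⟩ := mem_span_range_row_iff_exists_vecMul.1 hvM
  obtain ⟨d, hd⟩ := mem_span_range_row_iff_exists_vecMul.1 hvD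
  have hc : c = 0 :=
    calc c = c ᵥ* M.submatrix id p := by rw [hM, vecMul_one]
      _ = d ᵥ* D.submatrix id p := congrArg (· ∘ p) hd.symm
      _ = 0 := by rw [hD, vecMul_zero]
  rw [hc, zero_vecMul]

variable [Fintype n]

theorem finrank_span_row_of_submatrix_eq_one (hM : M.submatrix id p = 1) :
    finrank F (Submodule.span F (Set.range M.row)) = Fintype.card m := by
  rw [← rank_eq_finrank_span_row]
  refine le_antisymm (rank_le_card_height M) ?_
  simpa only [hM, rank_one] using M.rank_submatrix_le id p

theorem finrank_span_row_sup_of_submatrix_eq_one {N : Matrix m n F}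
    (hM : M.submatrix id p = 1) (hN : N.submatrix id p = 1) :
    finrank F ↥(Submodule.span F (Set.range M.row) ⊔ Submodule.span F (Set.range N.row))
      = Fintype.card m + (M - N).rank := by
  have hD : (M - N).submatrix id p = 0 := by
    change M.submatrix id p - N.submatrix id p = 0
    rw [hM, hN, sub_self]
  have hdisj := disjoint_span_row_of_submatrix_eq_one_of_submatrix_eq_zero hM hD
  have hsum := Submodule.finrank_sup_add_finrank_inf_eq
    (Submodule.span F (Set.range M.row)) (Submodule.span F (Set.range (M - N).row))
  rw [hdisj.eq_bot, finrank_bot, add_zero, finrank_span_row_of_submatrix_eq_one hM] at hsum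
  rw [rank_eq_finrank_span_row, ← hsum]
  exact congrArg (fun W : Submodule F (n → F) => finrank F W)
    (Submodule.span_range_sup_span_range_eq_sup_sub M N)

end Matrix

theorem stmt4_general (F : Type*) [Field F] (n k : ℕ)
    (U V : Submodule F (Fin n → F))
    (M N : Matrix (Fin k) (Fin n) F) (p : Fin k → Fin n)
    (hM : IsRREF M p) (hN : IsRREF N p)
    (hU : Submodule.span F (Set.range fun i => M i) = U)
    (hV : Submodule.span F (Set.range fun i => N i) = V)
    (e : Fin (n - k) → Fin n)
    (hre : Set.range e = (Set.range p)ᶜ) :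
    finrank F ↥(U ⊔ V) - finrank F ↥(U ⊓ V)
      = 2 * (M.submatrix id e - N.submatrix id e).rank := by
  have hMp := hM.submatrix_pivots_eq_one
  have hNp := hN.submatrix_pivots_eq_one
  have hUk : finrank F U = k := by
    rw [← hU]; exact (finrank_span_row_of_submatrix_eq_one hMp).trans (Fintype.card_fin k)
  have hVk : finrank F V = k := by
    rw [← hV]; exact (finrank_span_row_of_submatrix_eq_one hNp).trans (Fintype.card_fin k)
  have hsup : finrank F ↥(U ⊔ V) = k + (M - N).rank := by
    rw [← hU, ← hV]
    exact (finrank_span_row_sup_of_submatrix_eq_one hMp hNp).trans (by rw [Fintype.card_fin])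
  have hcols : ∀ j ∉ Set.range e, (M - N).col j = 0 := by
    rintro j hj
    obtain ⟨i, rfl⟩ : j ∈ Set.range p := by simpa [hre] using hj
    ext r
    exact sub_eq_zero.2 (congrFun (congrFun (hMp.trans hNp.symm) r) i)
  have hsub : M.submatrix id e - N.submatrix id e = (M - N).submatrix id e := rfl
  rw [hsub, rank_submatrix_id_eq_of_col_eq_zero _ e hcols]
  have hsum := Submodule.finrank_sup_add_finrank_inf_eq U V
  have hrank : (M - N).rank ≤ k := by simpa using rank_le_card_height (M - N)
  omega

/-- If `U` and `V` are `k`-dimensional subspaces of `F_q^n` whose RREF generator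
matrices have the same pivot columns, then
`d_S(U,V) = 2·rank(C_U − C_V)` where `C_U`, `C_V` are the submatrices obtained
by deleting the pivot columns. -/
theorem stmt4 (F : Type*) [Field F] [Fintype F] (n k : ℕ)
    (U V : Submodule F (Fin n → F))
    (M N : Matrix (Fin k) (Fin n) F) (p : Fin k → Fin n)
    (hM : IsRREF M p) (hN : IsRREF N p)
    (hU : Submodule.span F (Set.range fun i => M i) = U)
    (hV : Submodule.span F (Set.range fun i => N i) = V)
    (e : Fin (n - k) → Fin n) (he : Function.Injective e)
    (hre : Set.range e = (Set.range p)ᶜ) :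
    finrank F ↥(U ⊔ V) - finrank F ↥(U ⊓ V)
      = 2 * (M.submatrix id e - N.submatrix id e).rank :=
  stmt4_general F n k U V M N p hM hN hU hV e hre
end

section
/- For any two k-dimensional subspaces U, V of F_q^n, the subspace distance is at least the Hamming distance of their identifying vectors: d_S(U,V) ≥ d_H(i(U), i(V)). -/
open Module

/-- The identifying vector: the binary indicator of the pivot columns. -/
def pivotVec {k n : ℕ} (p : Fin k → Fin n) : Fin n → Bool :=
  fun j => decide (∃ i, p i = j)

/-!
Every row of an RREF generator matrix has its first nonzero entry at its pivot, so `U ⊔ V`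
contains vectors leading at each position of `P ∪ Q`, where `P`, `Q` are the pivot sets of `U`
and `V`. Vectors with distinct leading positions are independent, hence
`|P ∪ Q| ≤ dim (U ⊔ V)`. As `|P| = |Q| = dim U = dim V = k`, this gives
`d_H = 2 (|P ∪ Q| - k) ≤ 2 (dim (U ⊔ V) - k) = d_S`.
-/

open Finset
open scoped symmDiff

def IsLeadingIndex {σ R : Type*} [LinearOrder σ] [Zero R] (v : σ → R) (j : σ) : Prop :=
  v j ≠ 0 ∧ ∀ j' < j, v j' = 0

section LeadingIndex

variable {σ R : Type*} [LinearOrder σ]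

/- At the smallest leading index of the support, only one vector of a vanishing combination
contributes, so its coefficient is zero. -/
theorem linearIndependent_of_isLeadingIndex [Ring R] [NoZeroDivisors R] {ι : Type*}
    {v : ι → σ → R} {r : ι → σ} (hr : Function.Injective r)
    (hv : ∀ i, IsLeadingIndex (v i) (r i)) : LinearIndependent R v := by
  classical
  rw [linearIndependent_iff']
  intro s
  induction s using Finset.strongInduction with
  | _ s ih =>
    intro c hsum i hi
    obtain ⟨i₀, hi₀, hmin⟩ := s.exists_min_image r ⟨i, hi⟩
    have hc₀ : c i₀ = 0 := by
      have heval := congrFun hsum (r i₀)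
      simp only [Finset.sum_apply, Pi.smul_apply, smul_eq_mul, Pi.zero_apply] at heval
      rw [Finset.sum_eq_single_of_mem i₀ hi₀ fun b hb hb₀ =>
        by rw [(hv b).2 _ ((hmin b hb).lt_of_ne fun h => hb₀ (hr h).symm), mul_zero]] at heval
      exact (mul_eq_zero.mp heval).resolve_right (hv i₀).1
    rcases eq_or_ne i i₀ with rfl | hne
    · exact hc₀
    · refine ih _ (Finset.erase_ssubset hi₀) c ?_ i (Finset.mem_erase.mpr ⟨hne, hi⟩)
      rw [← hsum, Finset.sum_erase_eq_sub hi₀, hc₀, zero_smul, sub_zero]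

theorem card_le_finrank_of_isLeadingIndex [Field R] {W : Submodule R (σ → R)}
    [FiniteDimensional R W] (S : Finset σ)
    (hS : ∀ j ∈ S, ∃ v ∈ W, IsLeadingIndex v j) : #S ≤ finrank R W := by
  choose v hvW hv using fun j : S => hS j j.2
  have hli : LinearIndependent R fun j => (⟨v j, hvW j⟩ : W) :=
    .of_comp W.subtype (linearIndependent_of_isLeadingIndex Subtype.val_injective hv)
  simpa using hli.fintype_card_le_finrank

end LeadingIndex

namespace IsRREF

variable {F : Type*} [Field F] {k n : ℕ} {M : Matrix (Fin k) (Fin n) F} {p : Fin k → Fin n}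

theorem isLeadingIndex_row (hM : IsRREF M p) (i : Fin k) : IsLeadingIndex (M i) (p i) :=
  ⟨by rw [hM.2.1 i]; exact one_ne_zero, fun j hj => hM.2.2.1 i j hj⟩

theorem finrank_span_rows (hM : IsRREF M p) :
    finrank F (Submodule.span F (Set.range fun i => M i)) = k := by
  rw [finrank_span_eq_card
    (linearIndependent_of_isLeadingIndex hM.1.injective hM.isLeadingIndex_row), Fintype.card_fin]

theorem exists_mem_span_rows_isLeadingIndex (hM : IsRREF M p) {j : Fin n}
    (hj : j ∈ univ.image p) :
    ∃ v ∈ Submodule.span F (Set.range fun i => M i), IsLeadingIndex v j := by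
  obtain ⟨i, -, rfl⟩ := mem_image.mp hj
  exact ⟨M i, Submodule.subset_span ⟨i, rfl⟩, hM.isLeadingIndex_row i⟩

end IsRREF

theorem hammingDist_pivotVec {k n : ℕ} (p q : Fin k → Fin n) :
    hammingDist (pivotVec p) (pivotVec q) = #(univ.image p ∆ univ.image q) := by
  unfold hammingDist
  congr 1
  ext j
  simp only [mem_filter, mem_univ, true_and, mem_symmDiff, mem_image, pivotVec, ne_eq,
    decide_eq_decide]
  tauto

theorem stmt5_general (F : Type*) [Field F] (n k : ℕ)
    (U V : Submodule F (Fin n → F))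
    (M N : Matrix (Fin k) (Fin n) F) (p q : Fin k → Fin n)
    (hM : IsRREF M p) (hN : IsRREF N q)
    (hU : Submodule.span F (Set.range fun i => M i) = U)
    (hV : Submodule.span F (Set.range fun i => N i) = V) :
    hammingDist (pivotVec p) (pivotVec q)
      ≤ finrank F ↥(U ⊔ V) - finrank F ↥(U ⊓ V) := by
  rw [hammingDist_pivotVec]
  set P := univ.image p
  set Q := univ.image q
  have hP : #P = k := by simp [P, card_image_of_injective _ hM.1.injective]
  have hQ : #Q = k := by simp [Q, card_image_of_injective _ hN.1.injective]
  have hsymm : #(P ∆ Q) + #(P ∩ Q) = #(P ∪ Q) := by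
    rw [symmDiff_eq_sup_sdiff_inf]; exact card_sdiff_add_card_eq_card inter_subset_union
  have hunion : #(P ∪ Q) ≤ finrank F ↥(U ⊔ V) := by
    refine card_le_finrank_of_isLeadingIndex _ fun j hj => ?_
    rcases mem_union.mp hj with hjP | hjQ
    · obtain ⟨v, hvU, hv⟩ := hM.exists_mem_span_rows_isLeadingIndex hjP
      exact ⟨v, Submodule.mem_sup_left (hU ▸ hvU), hv⟩
    · obtain ⟨v, hvV, hv⟩ := hN.exists_mem_span_rows_isLeadingIndex hjQ
      exact ⟨v, Submodule.mem_sup_right (hV ▸ hvV), hv⟩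
  have hdims := Submodule.finrank_sup_add_finrank_inf_eq U V
  rw [show finrank F U = k from hU ▸ hM.finrank_span_rows,
    show finrank F V = k from hV ▸ hN.finrank_span_rows] at hdims
  have hcard := card_union_add_card_inter P Q
  omega

/-- For `k`-dimensional subspaces `U, V` of `F_q^n`, the subspace distance is at
least the Hamming distance of their identifying vectors. -/
theorem stmt5 (F : Type*) [Field F] [Fintype F] (n k : ℕ)
    (U V : Submodule F (Fin n → F))
    (M N : Matrix (Fin k) (Fin n) F) (p q : Fin k → Fin n)
    (hM : IsRREF M p) (hN : IsRREF N q)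
    (hU : Submodule.span F (Set.range fun i => M i) = U)
    (hV : Submodule.span F (Set.range fun i => N i) = V) :
    hammingDist (pivotVec p) (pivotVec q)
      ≤ finrank F ↥(U ⊔ V) - finrank F ↥(U ⊓ V) :=
  stmt5_general F n k U V M N p q hM hN hU hV
end

section
/- Let C₁ be a set of k-dimensional subspaces of F_q^n each having an identifying vector of weight k supported entirely in the first n₁ coordinates, and let C₂ be a set of k-dimensional subspaces each having identifying vector v with wt(v restricted to the first n₁ coordinates) ≤ k − δ. Then for any U ∈ C₁ and V ∈ C₂, d_S(U,V) ≥ 2δ. -/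
/-!
All pivots of `U` lie in the first `n₁` coordinates, so restricting to these coordinates is
injective on `U` (a vector of the row space is determined by its pivot entries). Hence
`U ⊓ V` embeds into the restriction of `V`, which is spanned by the restrictions of the at most
`k - δ` rows of `V` whose pivot lies among the first `n₁` coordinates: every other row vanishes
there, being zero left of its pivot. So `dim (U ⊓ V) ≤ k - δ`, and
`d_S(U, V) = 2k - 2 dim (U ⊓ V) ≥ 2δ`.
-/

open Module

theorem Submodule.finrank_inf_le_finrank_map_of_disjoint_ker {K E E' : Type*} [DivisionRing K]
    [AddCommGroup E] [Module K E] [AddCommGroup E'] [Module K E'] {f : E →ₗ[K] E'}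
    {U V : Submodule K E} [FiniteDimensional K V] (hU : Disjoint U (LinearMap.ker f)) :
    finrank K ↥(U ⊓ V) ≤ finrank K ↥(V.map f) := by
  have hinj : Function.Injective (f.restrict fun x (hx : x ∈ U ⊓ V) => mem_map_of_mem hx.2) := by
    rw [← LinearMap.ker_eq_bot, LinearMap.ker_eq_bot']
    intro x hx
    exact Subtype.ext (LinearMap.disjoint_ker.1 hU x x.2.1 (congrArg Subtype.val hx))
  exact LinearMap.finrank_le_finrank_of_injective hinj

theorem Submodule.finrank_map_span_le_card {K ι E E' : Type*} [DivisionRing K]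
    [AddCommGroup E] [Module K E] [AddCommGroup E'] [Module K E'] (f : E →ₗ[K] E')
    (v : ι → E) (s : Finset ι) (hv : ∀ i ∉ s, f (v i) = 0) :
    finrank K ↥((span K (Set.range v)).map f) ≤ s.card := by
  classical
  calc finrank K ↥((span K (Set.range v)).map f)
      ≤ finrank K ↥(span K ((s.image fun i => f (v i)) : Set E')) := by
        refine finrank_mono ?_
        rw [map_span, span_le]
        rintro _ ⟨_, ⟨i, rfl⟩, rfl⟩
        by_cases hi : i ∈ s
        · exact subset_span (Finset.mem_image_of_mem _ hi)
        · rw [hv i hi]; exact zero_mem _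
    _ ≤ (s.image fun i => f (v i)).card := finrank_span_finset_le_card _
    _ ≤ s.card := Finset.card_image_le

namespace IsRREF

variable {F : Type*} [Field F] {k n : ℕ} {M : Matrix (Fin k) (Fin n) F} {p : Fin k → Fin n}

theorem sum_smul_apply_pivot (hM : IsRREF M p) (c : Fin k → F) (i : Fin k) :
    (∑ i', c i' • M i') (p i) = c i := by
  rw [Finset.sum_apply, Finset.sum_eq_single i]
  · simp [hM.2.1 i]
  · intro i' _ hne; simp [hM.2.2.2 i i' hne]
  · simp

theorem eq_zero_of_mem_span_of_apply_pivot_eq_zero (hM : IsRREF M p) {x : Fin n → F}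
    (hx : x ∈ Submodule.span F (Set.range fun i => M i)) (h0 : ∀ i, x (p i) = 0) : x = 0 := by
  obtain ⟨c, rfl⟩ := (Submodule.mem_span_range_iff_exists_fun F).1 hx
  have hc : c = 0 := funext fun i => by rw [← hM.sum_smul_apply_pivot c i, h0, Pi.zero_apply]
  simp [hc]

theorem disjoint_span_ker_funLeft (hM : IsRREF M p) {s : Set (Fin n)} (hp : ∀ i, p i ∈ s) :
    Disjoint (Submodule.span F (Set.range fun i => M i))
      (LinearMap.ker (LinearMap.funLeft F F ((↑) : s → Fin n))) :=
  LinearMap.disjoint_ker.2 fun _ hx hx0 => hM.eq_zero_of_mem_span_of_apply_pivot_eq_zero hx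
    fun i => congrFun hx0 ⟨p i, hp i⟩

theorem finrank_map_funLeft_span_le (hM : IsRREF M p) (n₁ : ℕ) :
    finrank F ↥((Submodule.span F (Set.range fun i => M i)).map
        (LinearMap.funLeft F F ((↑) : {j : Fin n | (j : ℕ) < n₁} → Fin n))) ≤
      (Finset.univ.filter fun i => (p i : ℕ) < n₁).card := by
  refine Submodule.finrank_map_span_le_card _ _ _ fun i hi => funext fun j => ?_
  have hj : (j : ℕ) < p i := by
    simp only [Finset.mem_filter, Finset.mem_univ, true_and, not_lt] at hi
    exact lt_of_lt_of_le j.2 hi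
  exact hM.2.2.1 i j hj

end IsRREF

theorem stmt10_general (F : Type*) [Field F] (n n₁ k δ : ℕ) (hδ : δ ≤ k)
    (C₁ C₂ : Set (Submodule F (Fin n → F)))
    (h₁ : ∀ U ∈ C₁, finrank F ↥U = k ∧
      ∃ (M : Matrix (Fin k) (Fin n) F) (p : Fin k → Fin n),
        IsRREF M p ∧ Submodule.span F (Set.range fun i => M i) = U ∧
        ∀ i, (p i : ℕ) < n₁)
    (h₂ : ∀ V ∈ C₂, finrank F ↥V = k ∧
      ∃ (N : Matrix (Fin k) (Fin n) F) (q : Fin k → Fin n),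
        IsRREF N q ∧ Submodule.span F (Set.range fun i => N i) = V ∧
        (Finset.univ.filter fun i => (q i : ℕ) < n₁).card ≤ k - δ) :
    ∀ U ∈ C₁, ∀ V ∈ C₂,
      2 * δ ≤ finrank F ↥(U ⊔ V) - finrank F ↥(U ⊓ V) := by
  intro U hU V hV
  obtain ⟨hUk, M, p, hM, hMU, hp⟩ := h₁ U hU
  obtain ⟨hVk, N, q, hN, hNV, hq⟩ := h₂ V hV
  have hinf : finrank F ↥(U ⊓ V) ≤ k - δ :=
    calc finrank F ↥(U ⊓ V)
        ≤ finrank F ↥(V.map (LinearMap.funLeft F F ((↑) : {j : Fin n | (j : ℕ) < n₁} → Fin n))) :=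
          Submodule.finrank_inf_le_finrank_map_of_disjoint_ker
            (hMU ▸ hM.disjoint_span_ker_funLeft hp)
      _ ≤ k - δ := hNV ▸ (hN.finrank_map_funLeft_span_le n₁).trans hq
  have hdim := Submodule.finrank_sup_add_finrank_inf_eq U V
  omega

/-- If every subspace in `C₁` has its identifying vector supported entirely in
the first `n₁` coordinates (with full weight `k`), and every subspace in `C₂`
has at most `k − δ` pivots among the first `n₁` coordinates, then any
`U ∈ C₁`, `V ∈ C₂` satisfy `d_S(U,V) ≥ 2δ`. -/
theorem stmt10 (F : Type*) [Field F] [Fintype F] (n n₁ k δ : ℕ) (hδ : δ ≤ k)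
    (C₁ C₂ : Set (Submodule F (Fin n → F)))
    (h₁ : ∀ U ∈ C₁, finrank F ↥U = k ∧
      ∃ (M : Matrix (Fin k) (Fin n) F) (p : Fin k → Fin n),
        IsRREF M p ∧ Submodule.span F (Set.range fun i => M i) = U ∧
        ∀ i, (p i : ℕ) < n₁)
    (h₂ : ∀ V ∈ C₂, finrank F ↥V = k ∧
      ∃ (N : Matrix (Fin k) (Fin n) F) (q : Fin k → Fin n),
        IsRREF N q ∧ Submodule.span F (Set.range fun i => N i) = V ∧
        (Finset.univ.filter fun i => (q i : ℕ) < n₁).card ≤ k - δ) :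
    ∀ U ∈ C₁, ∀ V ∈ C₂,
      2 * δ ≤ finrank F ↥(U ⊔ V) - finrank F ↥(U ⊓ V) :=
  stmt10_general F n n₁ k δ hδ C₁ C₂ h₁ h₂
end

section
/- (Multilevel construction distance bound) Let S be a set of binary vectors of length n and weight k with pairwise Hamming distance at least 2δ. For each v ∈ S let C_v be a set of k-dimensional subspaces of F_q^n all having identifying vector v and pairwise subspace distance at least 2δ within C_v. Then ∪_{v∈S} C_v has pairwise subspace distance at least 2δ and cardinality Σ_{v∈S} |C_v|. -/
/-!
Call `j` a leading index of a subspace `W ≤ F^n` if some vector of `W` has its first nonzero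
entry at `j`. Restriction to the leading indices is injective on `W`, so `dim W` is at most their
number, and for the span of an RREF matrix they are exactly the pivots. With `A`, `B` the supports
of `i(U)`, `i(V)` this gives `dim (U ⊓ V) ≤ |A ∩ B|`, hence
`d_S(U, V) = |A| + |B| - 2 dim (U ⊓ V) ≥ |A| + |B| - 2 |A ∩ B| = d_H(i(U), i(V))`.
So codes `C v` with different `v` are `2δ` apart, and they are disjoint because a subspace
determines its identifying vector.
-/

open Module

/-- The subspace distance on subspaces of `F_q^n`. -/
noncomputable def subDist {F : Type*} [Field F] {n : ℕ} (U V : Submodule F (Fin n → F)) : ℕ :=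
  finrank F ↥(U ⊔ V) - finrank F ↥(U ⊓ V)

/-- Hamming weight of a binary vector. -/
def wtB {ι : Type*} [Fintype ι] (x : ι → Bool) : ℕ :=
  (Finset.univ.filter fun i => x i = true).card

/-- `U` has identifying vector `v` (indicator of the pivot columns of its RREF
generator matrix, with `k` rows). -/
def HasIdVec {F : Type*} [Field F] {n : ℕ} (k : ℕ)
    (U : Submodule F (Fin n → F)) (v : Fin n → Bool) : Prop :=
  ∃ (M : Matrix (Fin k) (Fin n) F) (p : Fin k → Fin n),
    IsRREF M p ∧ Submodule.span F (Set.range fun i => M i) = U ∧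
      ∀ j, v j = decide (∃ i, p i = j)

section LeadingIndices

variable {F : Type*} [Field F] {n : ℕ}

def LeadsAt (u : Fin n → F) (j : Fin n) : Prop :=
  u j ≠ 0 ∧ ∀ j' < j, u j' = 0

theorem LeadsAt.unique {u : Fin n → F} {j j' : Fin n} (h : LeadsAt u j) (h' : LeadsAt u j') :
    j = j' :=
  le_antisymm (not_lt.1 fun hlt => h'.1 (h.2 j' hlt)) (not_lt.1 fun hlt => h.1 (h'.2 j hlt))

theorem exists_leadsAt {u : Fin n → F} (hu : u ≠ 0) : ∃ j, LeadsAt u j := by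
  classical
  obtain ⟨j, hj⟩ := Function.ne_iff.1 hu
  obtain ⟨j₀, hj₀, hmin⟩ :=
    (Finset.univ.filter fun j => u j ≠ 0).exists_min_image id ⟨j, by simpa using hj⟩
  refine ⟨j₀, by simpa using hj₀, fun j' hj' => ?_⟩
  by_contra hne
  exact absurd (hmin j' (by simpa using hne)) (not_le.2 hj')

open Classical in
noncomputable def leadingIndices (W : Submodule F (Fin n → F)) : Finset (Fin n) :=
  Finset.univ.filter fun j => ∃ u ∈ W, LeadsAt u j

theorem mem_leadingIndices {W : Submodule F (Fin n → F)} {j : Fin n} :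
    j ∈ leadingIndices W ↔ ∃ u ∈ W, LeadsAt u j := by
  simp [leadingIndices]

theorem leadingIndices_mono {W W' : Submodule F (Fin n → F)} (h : W ≤ W') :
    leadingIndices W ⊆ leadingIndices W' := fun _ hj =>
  let ⟨u, hu, hlead⟩ := mem_leadingIndices.1 hj
  mem_leadingIndices.2 ⟨u, h hu, hlead⟩

theorem finrank_le_card_leadingIndices (W : Submodule F (Fin n → F)) :
    finrank F W ≤ (leadingIndices W).card := by
  let restrict : W →ₗ[F] (leadingIndices W → F) :=
    LinearMap.funLeft F F Subtype.val ∘ₗ W.subtype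
  have hinj : Function.Injective restrict := by
    rw [← LinearMap.ker_eq_bot, Submodule.eq_bot_iff]
    intro w hw
    by_contra hne
    obtain ⟨j, hj⟩ := exists_leadsAt (u := (w : Fin n → F)) (by simpa using hne)
    exact hj.1 (congrFun hw ⟨j, mem_leadingIndices.2 ⟨w, w.2, hj⟩⟩)
  calc finrank F W ≤ finrank F (leadingIndices W → F) :=
        LinearMap.finrank_le_finrank_of_injective hinj
    _ = (leadingIndices W).card := by simp

end LeadingIndices

namespace IsRREF

variable {F : Type*} [Field F] {k n : ℕ} {M : Matrix (Fin k) (Fin n) F} {p : Fin k → Fin n}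

theorem linearIndependent (hM : IsRREF M p) : LinearIndependent F fun i => M i :=
  Fintype.linearIndependent_iff.2 fun c hc i => by
    rw [← hM.sum_smul_apply_pivot c i, hc, Pi.zero_apply]

/-- The combination leads at the pivot of its first row with nonzero coefficient. -/
theorem exists_leadsAt_sum_smul (hM : IsRREF M p) {c : Fin k → F} (hc : c ≠ 0) :
    ∃ i, LeadsAt (∑ i', c i' • M i') (p i) := by
  classical
  obtain ⟨i, hi⟩ := Function.ne_iff.1 hc
  obtain ⟨i₀, hi₀, hmin⟩ :=
    (Finset.univ.filter fun i => c i ≠ 0).exists_min_image id ⟨i, by simpa using hi⟩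
  refine ⟨i₀, by simpa [hM.sum_smul_apply_pivot] using hi₀, fun j hj => ?_⟩
  rw [Finset.sum_apply]
  refine Finset.sum_eq_zero fun i' _ => ?_
  by_cases hci' : c i' = 0
  · simp [hci']
  · have : p i₀ ≤ p i' := hM.1.monotone (hmin i' (by simpa using hci'))
    simp [hM.2.2.1 i' j (lt_of_lt_of_le hj this)]

theorem mem_leadingIndices_span (hM : IsRREF M p) (j : Fin n) :
    j ∈ leadingIndices (Submodule.span F (Set.range fun i => M i)) ↔ ∃ i, p i = j := by
  rw [mem_leadingIndices]
  constructor
  · rintro ⟨u, hu, hlead⟩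
    obtain ⟨c, rfl⟩ := (Submodule.mem_span_range_iff_exists_fun F).1 hu
    obtain rfl | hc := eq_or_ne c 0
    · exact absurd (by simp) hlead.1
    obtain ⟨i, hi⟩ := hM.exists_leadsAt_sum_smul hc
    exact ⟨i, hi.unique hlead⟩
  · rintro ⟨i, rfl⟩
    exact ⟨M i, Submodule.subset_span ⟨i, rfl⟩, by simp [hM.2.1 i], hM.2.2.1 i⟩

end IsRREF

namespace HasIdVec

variable {F : Type*} [Field F] {n k l : ℕ} {U V : Submodule F (Fin n → F)} {v w : Fin n → Bool}

theorem eq_true_iff (h : HasIdVec k U v) (j : Fin n) : v j = true ↔ j ∈ leadingIndices U := by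
  obtain ⟨M, p, hM, rfl, hv⟩ := h
  rw [hv, hM.mem_leadingIndices_span, decide_eq_true_iff]

theorem unique (hv : HasIdVec k U v) (hw : HasIdVec l U w) : v = w :=
  funext fun j => Bool.eq_iff_iff.2 ((hv.eq_true_iff j).trans (hw.eq_true_iff j).symm)

theorem finrank_eq_wtB (h : HasIdVec k U v) : finrank F U = wtB v := by
  classical
  obtain ⟨M, p, hM, rfl, hv⟩ := h
  have hsupp : (Finset.univ.filter fun j => v j = true) = Finset.univ.image p := by
    ext j
    simp [hv]
  rw [finrank_span_eq_card hM.linearIndependent, wtB, hsupp,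
    Finset.card_image_of_injective _ hM.1.injective, Finset.card_univ]

theorem finrank_inf_le_wtB_and (hU : HasIdVec k U v) (hV : HasIdVec l V w) :
    finrank F ↥(U ⊓ V) ≤ wtB fun j => v j && w j := by
  refine (finrank_le_card_leadingIndices _).trans (Finset.card_le_card fun j hj => ?_)
  have hjU := leadingIndices_mono inf_le_left hj
  have hjV := leadingIndices_mono inf_le_right hj
  simp [(hU.eq_true_iff j).2 hjU, (hV.eq_true_iff j).2 hjV]

end HasIdVec

theorem hammingDist_add_two_mul_wtB_and {n : ℕ} (v w : Fin n → Bool) :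
    hammingDist v w + 2 * wtB (fun j => v j && w j) = wtB v + wtB w := by
  simp only [hammingDist, wtB, Finset.card_filter, Finset.mul_sum, ← Finset.sum_add_distrib]
  refine Finset.sum_congr rfl fun j _ => ?_
  cases v j <;> cases w j <;> rfl

theorem HasIdVec.hammingDist_le_subDist {F : Type*} [Field F] {n k l : ℕ}
    {U V : Submodule F (Fin n → F)} {v w : Fin n → Bool}
    (hU : HasIdVec k U v) (hV : HasIdVec l V w) : hammingDist v w ≤ subDist U V := by
  have hdim := Submodule.finrank_sup_add_finrank_inf_eq U V
  have hham := hammingDist_add_two_mul_wtB_and v w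
  have hinf := hU.finrank_inf_le_wtB_and hV
  rw [hU.finrank_eq_wtB, hV.finrank_eq_wtB] at hdim
  unfold subDist
  omega

open Classical in
theorem stmt15_general (F : Type*) [Field F] (n k δ : ℕ)
    (S : Finset (Fin n → Bool))
    (hSd : ∀ v ∈ S, ∀ w ∈ S, v ≠ w → 2 * δ ≤ hammingDist v w)
    (C : (Fin n → Bool) → Finset (Submodule F (Fin n → F)))
    (hCk : ∀ v ∈ S, ∀ U ∈ C v, finrank F ↥U = k ∧ HasIdVec k U v)
    (hCd : ∀ v ∈ S, ∀ U ∈ C v, ∀ V ∈ C v, U ≠ V → 2 * δ ≤ subDist U V) :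
    (∀ U ∈ S.biUnion C, ∀ V ∈ S.biUnion C, U ≠ V → 2 * δ ≤ subDist U V) ∧
    (S.biUnion C).card = ∑ v ∈ S, (C v).card := by
  constructor
  · intro U hU V hV hUV
    obtain ⟨v, hv, hUv⟩ := Finset.mem_biUnion.1 hU
    obtain ⟨w, hw, hVw⟩ := Finset.mem_biUnion.1 hV
    obtain rfl | hvw := eq_or_ne v w
    · exact hCd v hv U hUv V hVw hUV
    · exact (hSd v hv w hw hvw).trans
        ((hCk v hv U hUv).2.hammingDist_le_subDist (hCk w hw V hVw).2)
  · refine Finset.card_biUnion fun v hv w hw hvw => Finset.disjoint_left.2 fun U hUv hUw => ?_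
    exact hvw ((hCk v hv U hUv).2.unique (hCk w hw U hUw).2)

open Classical in
/-- Multilevel construction distance bound: if `S` is a binary constant-weight
code of weight `k` and minimum Hamming distance `2δ`, and for each `v ∈ S` the
code `C v` consists of `k`-dimensional subspaces with identifying vector `v`
and pairwise subspace distance at least `2δ`, then `∪_{v∈S} C v` has pairwise
subspace distance at least `2δ` and cardinality `Σ_{v∈S} |C v|`. -/
theorem stmt15 (F : Type*) [Field F] [Fintype F] (n k δ : ℕ)
    (S : Finset (Fin n → Bool))
    (hSw : ∀ v ∈ S, wtB v = k)
    (hSd : ∀ v ∈ S, ∀ w ∈ S, v ≠ w → 2 * δ ≤ hammingDist v w)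
    (C : (Fin n → Bool) → Finset (Submodule F (Fin n → F)))
    (hCk : ∀ v ∈ S, ∀ U ∈ C v, finrank F ↥U = k ∧ HasIdVec k U v)
    (hCd : ∀ v ∈ S, ∀ U ∈ C v, ∀ V ∈ C v, U ≠ V → 2 * δ ≤ subDist U V) :
    (∀ U ∈ S.biUnion C, ∀ V ∈ S.biUnion C, U ≠ V → 2 * δ ≤ subDist U V) ∧
    (S.biUnion C).card = ∑ v ∈ S, (C v).card :=
  stmt15_general F n k δ S hSd C hCk hCd
end

section
/- Suppose V is a k-dimensional subspace of F_q^n with generator matrix whose last μ₂ columns form a matrix V₂ with rank(V₂) = a₂ + r, where a₂ = wt(v̄₂) and r ≤ a₁ − δ with a₁ + a₂ = k and a₁ ≥ δ. If U is a k-dimensional subspace contained in {0} × F_q^{μ₂} (i.e., supported on the last μ₂ coordinates), then d_S(U,V) ≥ 2δ. -/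
/-!
Projecting onto the last `μ₂` coordinates is injective on `U` and maps `V` onto the row space
of `V₂`, so `dim (U ∩ V) ≤ rank V₂ = a₂ + r`. Hence
`d_S(U, V) = 2k - 2 dim (U ∩ V) ≥ 2 (a₁ - r) ≥ 2δ`.
-/

open Module

theorem Submodule.finrank_inf_le_finrank_map {R E E' : Type*} [Ring R] [StrongRankCondition R]
    [AddCommGroup E] [Module R E] [AddCommGroup E'] [Module R E']
    {U : Submodule R E} (V : Submodule R E) {f : E →ₗ[R] E'} [Module.Finite R (V.map f)]
    (hU : Disjoint U (LinearMap.ker f)) :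
    finrank R ↥(U ⊓ V) ≤ finrank R ↥(V.map f) := by
  have hinj : Function.Injective (f.domRestrict (U ⊓ V)) :=
    LinearMap.injective_domRestrict_iff.2 (hU.mono_left inf_le_left)
  refine LinearMap.finrank_le_finrank_of_injective
    (f := (f.domRestrict (U ⊓ V)).codRestrict (V.map f)
      fun x => Submodule.mem_map_of_mem x.2.2) fun x y hxy => hinj (congrArg Subtype.val hxy)

theorem Matrix.rank_submatrix_eq_finrank_map_span_row {m n n' R : Type*} [Fintype n] [Fintype n']
    [Field R] [Finite m] (M : Matrix m n R) (g : n' → n) :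
    (M.submatrix id g).rank =
      finrank R ↥((Submodule.span R (Set.range M.row)).map (LinearMap.funLeft R R g)) := by
  rw [Matrix.rank_eq_finrank_span_row, Submodule.map_span, ← Set.range_comp]
  rfl

theorem disjoint_ker_funLeft_inr {R ι κ : Type*} [Semiring R] {U : Submodule R (ι ⊕ κ → R)}
    (hU : ∀ x ∈ U, ∀ i, x (Sum.inl i) = 0) :
    Disjoint U (LinearMap.ker (LinearMap.funLeft R R (Sum.inr : κ → ι ⊕ κ))) := by
  refine Submodule.disjoint_def.2 fun x hxU hx => funext ?_
  rintro (i | j)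
  · exact hU x hxU i
  · exact congrFun hx j

theorem stmt17_general (F : Type*) [Field F] (m μ₂ k a₁ a₂ r δ : ℕ)
    (hk : a₁ + a₂ = k) (ha₁ : δ ≤ a₁) (hr : r ≤ a₁ - δ)
    (U V : Submodule F (Fin m ⊕ Fin μ₂ → F))
    (M : Matrix (Fin k) (Fin m ⊕ Fin μ₂) F)
    (hMV : Submodule.span F (Set.range fun i => M i) = V)
    (hV : finrank F ↥V = k)
    (hrank : (M.submatrix id Sum.inr).rank = a₂ + r)
    (hU : finrank F ↥U = k)
    (hUsupp : ∀ x ∈ U, ∀ j : Fin m, x (Sum.inl j) = 0) :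
    2 * δ ≤ finrank F ↥(U ⊔ V) - finrank F ↥(U ⊓ V) := by
  have hinf : finrank F ↥(U ⊓ V) ≤ a₂ + r := by
    rw [← hrank, Matrix.rank_submatrix_eq_finrank_map_span_row, Matrix.row, hMV]
    exact Submodule.finrank_inf_le_finrank_map V (disjoint_ker_funLeft_inr hUsupp)
  have hsum := Submodule.finrank_sup_add_finrank_inf_eq U V
  omega

/-- Suppose `V` is a `k`-dimensional subspace with generator matrix whose last
`μ₂` columns form `V₂` with `rank(V₂) = a₂ + r`, where `a₁ + a₂ = k`,
`a₁ ≥ δ` and `r ≤ a₁ − δ`. If `U` is a `k`-dimensional subspace supported on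
the last `μ₂` coordinates, then `d_S(U,V) ≥ 2δ`. -/
theorem stmt17 (F : Type*) [Field F] [Fintype F] (m μ₂ k a₁ a₂ r δ : ℕ)
    (hk : a₁ + a₂ = k) (ha₁ : δ ≤ a₁) (hr : r ≤ a₁ - δ)
    (U V : Submodule F (Fin m ⊕ Fin μ₂ → F))
    (M : Matrix (Fin k) (Fin m ⊕ Fin μ₂) F)
    (hMV : Submodule.span F (Set.range fun i => M i) = V)
    (hV : finrank F ↥V = k)
    (hrank : (M.submatrix id Sum.inr).rank = a₂ + r)
    (hU : finrank F ↥U = k)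
    (hUsupp : ∀ x ∈ U, ∀ j : Fin m, x (Sum.inl j) = 0) :
    2 * δ ≤ finrank F ↥(U ⊔ V) - finrank F ↥(U ⊓ V) :=
  stmt17_general F m μ₂ k a₁ a₂ r δ hk ha₁ hr U V M hMV hV hrank hU hUsupp
end

section
/- For positive integers m ≥ n ≥ d and a Ferrers diagram F = [γ₁, …, γ_n] of size m × n in which each of the rightmost d − 1 columns has at least n dots (γ_{n−d+2}, …, γ_n ≥ n), the Singleton-like bound min_i{v_i} from Lemma (Etzion–Silberstein) equals Σ_{i=1}^{n−d+1} γ_i, where v_i is the number of dots of F remaining after deleting the top i rows and rightmost d−1−i columns. -/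
/-!
`v₀` is the claimed sum, so it suffices that `v₀ ≤ vᵢ` for every `i < d`. Deleting the top `i`
rows costs the first `n - d + 1` columns at most `i` dots each, while the `i` additional columns
each keep at least `n - i ≥ n - d + 1` dots, which pays for the loss.
-/

open Finset

theorem sum_range_le_sum_range_add_tsub {f : ℕ → ℕ} {k i : ℕ}
    (h : ∀ j < i, k + i ≤ f (k + j)) :
    ∑ j ∈ range k, f j ≤ ∑ j ∈ range (k + i), (f j - i) := by
  have hloss : ∑ j ∈ range k, f j ≤ ∑ j ∈ range k, (f j - i) + k * i := by
    calc ∑ j ∈ range k, f j ≤ ∑ j ∈ range k, ((f j - i) + i) :=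
          sum_le_sum fun _ _ => le_tsub_add
      _ = ∑ j ∈ range k, (f j - i) + k * i := by simp [sum_add_distrib]
  have hgain : k * i ≤ ∑ j ∈ range i, (f (k + j) - i) := by
    calc k * i = ∑ _j ∈ range i, k := by simp [mul_comm]
      _ ≤ ∑ j ∈ range i, (f (k + j) - i) :=
          sum_le_sum fun j hj => Nat.le_sub_of_add_le (h j (mem_range.mp hj))
  rw [sum_range_add]
  omega

theorem stmt18 (n d : ℕ) (hd1 : 1 ≤ d) (hdn : d ≤ n)
    (γ : ℕ → ℕ)
    (hcols : ∀ j, n - d + 1 ≤ j → j < n → n ≤ γ j) :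
    (Finset.range d).inf' (Finset.nonempty_range_iff.mpr (by omega))
        (fun i => ∑ j ∈ Finset.range (n - d + 1 + i), (γ j - i))
      = ∑ j ∈ Finset.range (n - d + 1), γ j := by
  apply le_antisymm
  · exact (inf'_le _ (mem_range.mpr (by omega : 0 < d))).trans_eq (by simp)
  · refine le_inf' _ _ fun i hi => sum_range_le_sum_range_add_tsub fun j hj => ?_
    have hi : i < d := mem_range.mp hi
    have := hcols (n - d + 1 + j) (by omega) (by omega)
    omega
end
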